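/- arXiv:2602.14131 — 2 statements merged into one kernel-verified Lean document; each statement's English description precedes it below -/
import Mathlib

section
/- The collection of soft a-open sets (soft sets G with int_a(G) = G) forms a soft topology: it contains the null and absolute soft sets, and is closed under arbitrary soft unions and finite soft intersections (all operations taken parameterwise). -/
theorem stmt_7 {X E : Type*} (a : X → E → Set X) (ha : ∀ x e, x ∈ a x e) :
    (∀ e : E, {x : X | a x e ⊆ (∅ : Set X)} = (∅ : Set X)) ∧
    (∀ e : E, {x : X | a x e ⊆ (Set.univ : Set X)} = (Set.univ : Set X)) ∧
    (∀ 𝒢 : Set (E → Set X), (∀ G ∈ 𝒢, ∀ e, {x : X | a x e ⊆ G e} = G e) →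
      ∀ e, {x : X | a x e ⊆ ⋃ G ∈ 𝒢, G e} = ⋃ G ∈ 𝒢, G e) ∧
    (∀ G H : E → Set X, (∀ e, {x : X | a x e ⊆ G e} = G e) →
      (∀ e, {x : X | a x e ⊆ H e} = H e) →
      ∀ e, {x : X | a x e ⊆ G e ∩ H e} = G e ∩ H e) := by
  refine ⟨fun e => ?_, fun e => by simp, fun 𝒢 h𝒢 e => ?_, fun G H hG hH e => ?_⟩
  · ext x; simp only [Set.mem_setOf_eq, Set.subset_empty_iff, Set.mem_empty_iff_false, iff_false]
    intro h; exact Set.notMem_empty x (h ▸ ha x e)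
  · ext x
    simp only [Set.mem_setOf_eq]
    constructor
    · intro h; exact h (ha x e)
    · intro hx
      rcases Set.mem_iUnion₂.mp hx with ⟨G, hGm, hxG⟩
      have : x ∈ {z : X | a z e ⊆ G e} := (h𝒢 G hGm e).symm ▸ hxG
      exact this.trans (Set.subset_biUnion_of_mem (u := fun G => G e) hGm)
  · ext x
    simp only [Set.mem_setOf_eq, Set.subset_inter_iff, Set.mem_inter_iff]
    constructor
    · rintro ⟨h1, h2⟩; exact ⟨h1 (ha x e), h2 (ha x e)⟩
    · rintro ⟨h1, h2⟩
      have h1' : x ∈ {z : X | a z e ⊆ G e} := (hG e).symm ▸ h1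
      have h2' : x ∈ {z : X | a z e ⊆ H e} := (hH e).symm ▸ h2
      exact ⟨h1', h2'⟩
end

section
/- In a soft aura topological space, soft a-T₁ and soft a-T₂ are equivalent: for all distinct x, y and all e, (y ∉ a(x)(e) and x ∉ a(y)(e)) holds for all pairs if and only if a(x)(e) ∩ a(y)(e) = ∅ holds for all distinct pairs and all e. -/
theorem stmt_14 {X E : Type*} (a : X → E → Set X) (ha : ∀ x e, x ∈ a x e) :
    (∀ x y : X, x ≠ y → ∀ e : E, y ∉ a x e ∧ x ∉ a y e) ↔
      (∀ x y : X, x ≠ y → ∀ e : E, a x e ∩ a y e = ∅) := by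
  constructor
  · intro h x y hxy e
    ext z
    simp only [Set.mem_inter_iff, Set.mem_empty_iff_false, iff_false, not_and]
    intro hzx hzy
    by_cases hz : z = x
    · exact (h x y hxy e).2 (hz ▸ hzy)
    · exact (h x z (Ne.symm hz) e).1 hzx
  · intro h x y hxy e
    constructor
    · intro hy
      have := h x y hxy e
      exact absurd this (Set.nonempty_iff_ne_empty.mp ⟨y, hy, ha y e⟩)
    · intro hx
      have := h x y hxy e
      exact absurd this (Set.nonempty_iff_ne_empty.mp ⟨x, ha x e, hx⟩)
end
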